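/- Let μ ∈ ℂ with Im μ ≠ 0, ℰ diagonal with ℰ² = I, and F ∈ ℂⁿ a column vector with Fᵀ ℰ F* ≠ 0. Define X = μ(μ - μ*) ℰF* / (μ* FᵀℰF*) and B = X Fᵀ. Then (I + μ*B/(μ(μ* - μ))) ℰ (XFᵀ)† ℰ = 0, i.e. B solves the single-pole algebraic dressing relation. -/
import Mathlib


open Matrix

/-- The explicit formula `X = μ(μ-μ*)ℰF*/(μ* FᵀℰF*)`, `B = XFᵀ` solves the
single-pole algebraic dressing relation `(I + μ*B/(μ(μ*-μ))) ℰ B† ℰ = 0`. -/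
theorem explicit_X_solves_dressing {n : ℕ}
    (E : Matrix (Fin n) (Fin n) ℂ) (hEdiag : E.IsDiag) (hE2 : E * E = 1)
    (hEherm : Eᴴ = E)
    (μ : ℂ) (hμ : μ.im ≠ 0)
    (F : Matrix (Fin n) (Fin 1) ℂ)
    (hF : (Fᵀ * E * F.map (starRingEnd ℂ)) 0 0 ≠ 0) :
    let X : Matrix (Fin n) (Fin 1) ℂ :=
      (μ * (μ - (starRingEnd ℂ) μ) /
        ((starRingEnd ℂ) μ * (Fᵀ * E * F.map (starRingEnd ℂ)) 0 0)) •
        (E * F.map (starRingEnd ℂ))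
    let B : Matrix (Fin n) (Fin n) ℂ := X * Fᵀ
    (1 + ((starRingEnd ℂ) μ / (μ * ((starRingEnd ℂ) μ - μ))) • B) *
      (E * (X * Fᵀ)ᴴ * E) = 0 := by
  intro X B
  have hμ0 : μ ≠ 0 := fun h => hμ (by simp [h])
  have hcμ0 : (starRingEnd ℂ) μ ≠ 0 := by
    simpa using star_ne_zero.mpr hμ0
  have hdiff : (starRingEnd ℂ) μ - μ ≠ 0 := by
    intro h
    apply hμ
    have := congrArg Complex.im h
    simp [Complex.sub_im, Complex.conj_im] at this
    linarith
  set Fc := F.map (starRingEnd ℂ) with hFc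
  set s := (Fᵀ * E * Fc) 0 0 with hs
  set c := μ * (μ - (starRingEnd ℂ) μ) / ((starRingEnd ℂ) μ * s) with hc
  set d := (starRingEnd ℂ) μ / (μ * ((starRingEnd ℂ) μ - μ)) with hd
  set M := E * Fc * Fᵀ with hM
  have h11 : Fᵀ * E * Fc = s • (1 : Matrix (Fin 1) (Fin 1) ℂ) := by
    ext i j
    fin_cases i; fin_cases j
    simp [hs]
  have hMM : M * M = s • M := by
    have : M * M = E * Fc * (Fᵀ * E * Fc) * Fᵀ := by
      simp only [hM, Matrix.mul_assoc]
    rw [this, h11]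
    simp only [Matrix.mul_smul, Matrix.smul_mul, Matrix.mul_one, hM, Matrix.mul_assoc]
  have hFtH : (Fᵀ)ᴴ = Fc := by
    ext i j; simp [hFc, Matrix.conjTranspose_apply]
  have hFcH : Fcᴴ = Fᵀ := by
    ext i j; simp [hFc, Matrix.conjTranspose_apply]
  have hBH : E * (X * Fᵀ)ᴴ * E = (starRingEnd ℂ) c • M := by
    show E * ((c • (E * Fc)) * Fᵀ)ᴴ * E = (starRingEnd ℂ) c • M
    rw [Matrix.smul_mul, Matrix.conjTranspose_smul, Matrix.conjTranspose_mul,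
      Matrix.conjTranspose_mul, hFtH, hFcH, hEherm, Matrix.mul_smul, Matrix.smul_mul]
    congr 1
    calc E * (Fc * (Fᵀ * E)) * E = E * Fc * Fᵀ * (E * E) := by
          simp only [Matrix.mul_assoc]
      _ = M := by rw [hE2, Matrix.mul_one, hM]
  have hB : B = c • M := by
    show (c • (E * Fc)) * Fᵀ = c • M
    rw [Matrix.smul_mul, hM]
  rw [hBH, hB, smul_smul, add_mul, one_mul, Matrix.smul_mul, Matrix.mul_smul, hMM,
    smul_smul, smul_smul, ← add_smul]
  have hzero : (starRingEnd ℂ) c + d * c * (starRingEnd ℂ) c * s = 0 := by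
    have hdcs : d * c * s = -1 := by
      rw [hd, hc]
      field_simp
      ring
    calc (starRingEnd ℂ) c + d * c * (starRingEnd ℂ) c * s
        = (starRingEnd ℂ) c * (1 + d * c * s) := by ring
      _ = 0 := by rw [hdcs]; ring
  rw [hzero, zero_smul]
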